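/- The expected length of a Best-of-3 game under the Catch-Up Rule, with A serving first, is 2 + p - p^2 + pq; consequently, the expected length under CR exceeds that under SR, namely (2 + p - p^2 + pq) - (3 - q - p^2 + pq) = p + q - 1 > 0, if and only if p + q > 1. -/

import Mathlib

/-! Under the Catch-Up Rule the first point decides who serves the second: if A wins it, B
serves at 1–0 and needs two more points only when she holds serve (probability `q`); if B wins
it, A serves at 0–1 and the game goes to 1–1 only when he holds (probability `p`). A 1–1 game
lasts exactly one more point, so the expected length is
`1 + p (1 + q) + (1 - p) (1 + p) = 2 + p - p² + pq`, and the comparison with the Standard Rule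
is linear arithmetic. -/

/-- Expected number of points remaining in a service game played to `goal` points.
`next prevSrv aWon` gives the next server (`true` = A serves). `srv = true` means
A serves the current point; A wins on his serve with probability `p`, B wins on her
serve with probability `q`. `fuel` bounds the number of points played. -/
def expLen (p q : ℝ) (goal : ℕ) (next : Bool → Bool → Bool) :
    ℕ → ℕ → ℕ → Bool → ℝ
  | 0, _, _, _ => 0
  | fuel + 1, x, y, srv =>
    if goal ≤ x ∨ goal ≤ y then 0
    else
      1 + (if srv then p else 1 - q) * expLen p q goal next fuel (x + 1) y (next srv true) +
        (1 - if srv then p else 1 - q) * expLen p q goal next fuel x (y + 1) (next srv false)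

/-- Catch-Up Rule: the loser of the point serves next. -/
def nextCR : Bool → Bool → Bool := fun _ aWon => !aWon

section

variable (p q : ℝ) {goal : ℕ} (next : Bool → Bool → Bool)

theorem expLen_of_goal_le {x y : ℕ} (h : goal ≤ x ∨ goal ≤ y) (n : ℕ) (srv : Bool) :
    expLen p q goal next n x y srv = 0 := by
  cases n <;> simp [expLen, h]

theorem expLen_succ_of_lt {x y : ℕ} (hx : x < goal) (hy : y < goal) (n : ℕ) (srv : Bool) :
    expLen p q goal next (n + 1) x y srv =
      1 + (if srv then p else 1 - q) * expLen p q goal next n (x + 1) y (next srv true) +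
        (1 - if srv then p else 1 - q) * expLen p q goal next n x (y + 1) (next srv false) := by
  rw [expLen, if_neg (by omega)]

theorem expLen_match_point (k n : ℕ) (srv : Bool) :
    expLen p q (k + 1) next (n + 1) k k srv = 1 := by
  rw [expLen_succ_of_lt p q next (by omega) (by omega),
    expLen_of_goal_le p q next (.inl le_rfl), expLen_of_goal_le p q next (.inr le_rfl)]
  ring

end

theorem expLen_nextCR_A_leads (p q : ℝ) (n : ℕ) :
    expLen p q 2 nextCR (n + 2) 1 0 false = 1 + q := by
  rw [expLen_succ_of_lt p q nextCR (by omega) (by omega),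
    expLen_of_goal_le p q nextCR (.inl le_rfl), expLen_match_point]
  simp only [Bool.false_eq_true, if_false]
  ring

theorem expLen_nextCR_B_leads (p q : ℝ) (n : ℕ) :
    expLen p q 2 nextCR (n + 2) 0 1 true = 1 + p := by
  rw [expLen_succ_of_lt p q nextCR (by omega) (by omega),
    expLen_of_goal_le p q nextCR (.inr le_rfl), expLen_match_point]
  simp only [if_true]
  ring

theorem expLen_bestOf3_nextCR (p q : ℝ) :
    expLen p q 2 nextCR 4 0 0 true = 2 + p - p ^ 2 + p * q := by
  rw [expLen_succ_of_lt p q nextCR (by omega) (by omega)]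
  simp only [nextCR, Bool.not_true, Bool.not_false, if_true]
  rw [expLen_nextCR_A_leads p q 1, expLen_nextCR_B_leads p q 1]
  ring

theorem bestOf3_CR_expLen_general (p q : ℝ) :
    expLen p q 2 nextCR 4 0 0 true = 2 + p - p ^ 2 + p * q ∧
      (2 + p - p ^ 2 + p * q) - (3 - q - p ^ 2 + p * q) = p + q - 1 ∧
      (expLen p q 2 nextCR 4 0 0 true > 3 - q - p ^ 2 + p * q ↔ p + q > 1) := by
  rw [expLen_bestOf3_nextCR]
  refine ⟨rfl, by ring, ?_⟩
  constructor <;> intro h <;> linarith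

/-- The expected length of a Best-of-3 game under the Catch-Up Rule, with A serving
first, is `2 + p - p² + pq`; it exceeds the Standard Rule expected length
`3 - q - p² + pq` by `p + q - 1`, hence is strictly larger iff `p + q > 1`. -/
theorem bestOf3_CR_expLen (p q : ℝ) (hp0 : 0 < p) (hp1 : p < 1)
    (hq0 : 0 < q) (hq1 : q < 1) :
    expLen p q 2 nextCR 4 0 0 true = 2 + p - p ^ 2 + p * q ∧
      (2 + p - p ^ 2 + p * q) - (3 - q - p ^ 2 + p * q) = p + q - 1 ∧
      (expLen p q 2 nextCR 4 0 0 true > 3 - q - p ^ 2 + p * q ↔ p + q > 1) :=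
  bestOf3_CR_expLen_general p q
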